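/- Soundness of the lazy bug-finding algorithm with counterexamples: let ψ = ∀^{G₁} π₁:O₁. ∃^{G₂} π₂:O₂. □φ be an OHyperLTL_safe formula, let n ∈ ℕ, and let k ≤ n be such that SymTraces^k_{O₂}(G₂) is finite. Suppose there exist a symbolic trace τ̂₁ ∈ SymTraces^k_{O₁}(G₁) and an assignment ρ : V* → Val satisfying path(τ̂₁) ∧ ¬⟦∃^{G₂} π₂:O₂. □φ⟧^k_{[π₁ ← τ̂₁]}. Then γ_ρ(τ̂₁) ∈ Traces^k_{O₁}(G₁), there is no σ₂ ∈ Traces^k_{O₂}(G₂) such that the map [π₁ ← γ_ρ(τ̂₁), π₂ ← σ₂] satisfies □φ under ⊨^k, and consequently ¬(⊨^{≤n} ψ). -/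

import Mathlib

open scoped Classical

namespace HyperSE

variable {Val X L V : Type}

/-- Guarded-assignment instructions: deterministic assignment of (the shallow semantics of)
a term to a variable, or a nondeterministic assignment (`havoc`). -/
inductive Instr (Val X : Type) where
  | assign (x : X) (e : (X → Val) → Val)
  | havoc (x : X)

/-- Concrete execution of an instruction on memories. -/
def Instr.exec : Instr Val X → (X → Val) → (X → Val) → Prop
  | .assign x e, m, m' => m' = Function.update m x (e m)
  | .havoc x, m, m' => ∃ v : Val, m' = Function.update m x v

/-- A program graph: edges between locations, an initial location, and an
instruction (`effect`) and a guard for every edge. -/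
structure ProgramGraph (Val X L : Type) where
  edges : L → L → Prop
  init : L
  effect : L → L → Instr Val X
  guard : L → L → (X → Val) → Prop

/-- Execution states: a location together with a memory. -/
abbrev State (Val X L : Type) := L × (X → Val)

/-- The transition relation of a program graph. -/
def ProgramGraph.Step (G : ProgramGraph Val X L) (s₁ s₂ : State Val X L) : Prop :=
  G.edges s₁.1 s₂.1 ∧ G.guard s₁.1 s₂.1 s₁.2 ∧ (G.effect s₁.1 s₂.1).exec s₁.2 s₂.2

/-- Finite traces: nonempty finite sequences of states starting in the initial state
(initial location together with the fixed initial memory `m₀`) and following `Step`. -/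
def FinTraces (m₀ : X → Val) (G : ProgramGraph Val X L) : Set (List (State Val X L)) :=
  { τ | τ.head? = some (G.init, m₀) ∧ τ.Chain' G.Step }

/-- Projection `[σ]_O` of a finite trace onto the observed locations `O`. -/
noncomputable def obs (O : Set L) (σ : List (State Val X L)) : List (State Val X L) :=
  σ.filter fun s => decide (s.1 ∈ O)

/-- `|σ|_O`: the number of observed states of `σ`. -/
noncomputable def obsLen (O : Set L) (σ : List (State Val X L)) : ℕ :=
  (obs O σ).length

/-- `Traces*_O(G)`: observational projections of the finite traces of `G`. -/
def TracesO (m₀ : X → Val) (G : ProgramGraph Val X L) (O : Set L) :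
    Set (List (State Val X L)) :=
  { t | ∃ τ ∈ FinTraces m₀ G, t = obs O τ }

/-- `Traces^k_O(G)`: observational projections of length `k`. -/
def TracesKO (m₀ : X → Val) (G : ProgramGraph Val X L) (O : Set L) (k : ℕ) :
    Set (List (State Val X L)) :=
  { t | t ∈ TracesO m₀ G O ∧ t.length = k }

/-- Infinite traces of a program graph. -/
def InfTraces (m₀ : X → Val) (G : ProgramGraph Val X L) : Set (ℕ → State Val X L) :=
  { σ | σ 0 = (G.init, m₀) ∧ ∀ i, G.Step (σ i) (σ (i + 1)) }

/-- `t` is the subsequence of `σ` consisting of exactly the states whose location is in `O`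
(in particular `σ` has infinitely many observations). -/
def IsObsSubseq (O : Set L) (σ t : ℕ → State Val X L) : Prop :=
  ∃ f : ℕ → ℕ, StrictMono f ∧ (∀ n, t n = σ (f n)) ∧ (∀ n, (σ (f n)).1 ∈ O) ∧
    ∀ i, (σ i).1 ∈ O → ∃ n, f n = i

/-- `Traces^ω_O(G)`: observational projections of the infinite traces of `G` that have
infinitely many observations. -/
def TracesOmegaO (m₀ : X → Val) (G : ProgramGraph Val X L) (O : Set L) :
    Set (ℕ → State Val X L) :=
  { t | ∃ σ ∈ InfTraces m₀ G, IsObsSubseq O σ t }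

/-- OHyperLTL_safe formulas: a prefix of trace quantifiers (each annotated with a program
graph and a set of observed locations), followed by an invariant `□φ`, where the
quantifier-free formula `φ` is represented shallowly by a predicate on valuations of the
indexed variables `x_π`. -/
inductive HForm (Val X L V : Type) where
  | all (G : ProgramGraph Val X L) (O : Set L) (π : V) (ψ : HForm Val X L V)
  | ex (G : ProgramGraph Val X L) (O : Set L) (π : V) (ψ : HForm Val X L V)
  | always (φ : (V → X → Val) → Prop)

/-- The valuation `Pi_i` (with default value `m₀ x` for unbound trace variables). -/
def memAt (m₀ : X → Val) (Pi : V → List (State Val X L)) (i : ℕ) : V → X → Val :=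
  fun π x =>
    match (Pi π)[i]? with
    | some s => s.2 x
    | none => m₀ x

/-- Bounded semantics `Pi ⊨^k ψ`: quantifiers range over observed traces of length
exactly `k`, and the invariant is checked at positions `0 ≤ i < k`.
The empty (partial) trace assignment is modelled by the total map `fun _ => []`. -/
def SatK (m₀ : X → Val) (k : ℕ) :
    HForm Val X L V → (V → List (State Val X L)) → Prop
  | .all G O π ψ, Pi => ∀ σ ∈ TracesKO m₀ G O k, SatK m₀ k ψ (Function.update Pi π σ)
  | .ex G O π ψ, Pi => ∃ σ ∈ TracesKO m₀ G O k, SatK m₀ k ψ (Function.update Pi π σ)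
  | .always φ, Pi => ∀ i < k, φ (memAt m₀ Pi i)

/-- `⊨^k ψ` : satisfaction of `ψ` under the bounded semantics, starting from the empty
trace assignment. -/
def ModelsK (m₀ : X → Val) (k : ℕ) (ψ : HForm Val X L V) : Prop :=
  SatK m₀ k ψ fun _ => []

/-- Upper-bounded semantics `⊨^{≤ n} ψ`. -/
def ModelsUpTo (m₀ : X → Val) (n : ℕ) (ψ : HForm Val X L V) : Prop :=
  ∀ k ≤ n, ModelsK m₀ k ψ

/-- Infinite-trace semantics `Pi ⊨^ω ψ`. -/
def SatOmega (m₀ : X → Val) :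
    HForm Val X L V → (V → (ℕ → State Val X L)) → Prop
  | .all G O π ψ, Pi => ∀ σ ∈ TracesOmegaO m₀ G O, SatOmega m₀ ψ (Function.update Pi π σ)
  | .ex G O π ψ, Pi => ∃ σ ∈ TracesOmegaO m₀ G O, SatOmega m₀ ψ (Function.update Pi π σ)
  | .always φ, Pi => ∀ i : ℕ, φ fun π x => (Pi π i).2 x

/-- `⊨^ω ψ` : satisfaction of `ψ` under the infinite-trace semantics, starting from the
empty trace assignment (modelled by the default environment). -/
def ModelsOmega [Inhabited L] (m₀ : X → Val) (ψ : HForm Val X L V) : Prop :=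
  SatOmega m₀ ψ fun _ _ => (default, m₀)

/-- `G` is infinitely observable w.r.t. `O`: every observed trace with `k` observations is
a (length-`k`) prefix of some infinite observed trace. -/
def ProgramGraph.InfObs (m₀ : X → Val) (G : ProgramGraph Val X L) (O : Set L) : Prop :=
  ∀ k : ℕ, ∀ t ∈ TracesKO m₀ G O k, ∃ t' ∈ TracesOmegaO m₀ G O,
    t = List.ofFn fun i : Fin k => t' i

/-- The list of quantified program graphs (with their observed locations) of a formula. -/
def HForm.graphs : HForm Val X L V → List (ProgramGraph Val X L × Set L)
  | .all G O _ ψ => (G, O) :: ψ.graphs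
  | .ex G O _ ψ => (G, O) :: ψ.graphs
  | .always _ => []

/-- A formula is infinitely observable if all its quantified program graphs are. -/
def HForm.InfObs (m₀ : X → Val) (ψ : HForm Val X L V) : Prop :=
  ∀ p ∈ ψ.graphs, ProgramGraph.InfObs m₀ p.1 p.2

/-- `G` is `(k,O)`-observable: there is a bound `b` such that every finite trace with
exactly `k` observations has a prefix of length `< b` with the same `k` observations. -/
def ProgramGraph.Observable (m₀ : X → Val) (G : ProgramGraph Val X L) (O : Set L)
    (k : ℕ) : Prop :=
  ∃ b : ℕ, ∀ τ ∈ FinTraces m₀ G, obsLen O τ = k →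
    ∃ τ', τ' <+: τ ∧ obsLen O τ' = k ∧ τ'.length < b

/-! ### Symbolic execution

Symbolic variables are drawn from the countably infinite set `V* = ℕ` (one disjoint bank
of symbolic variables per trace variable is used when evaluating symbolic encodings of
formulas). Symbolic terms and path formulas are represented shallowly as functions of
assignments `ρ : ℕ → Val`. Fresh variables are chosen by a fixed deterministic scheme:
the symbolic state carries a counter of the used variables. -/

/-- A symbolic state: a location, a path formula, a symbolic memory and the counter of
the fresh-variable scheme. -/
structure SymState (Val X L : Type) where
  loc : L
  path : (ℕ → Val) → Prop
  smem : X → (ℕ → Val) → Val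
  ctr : ℕ

/-- Symbolic execution of an instruction on (symbolic memory, fresh counter) pairs. -/
def Instr.symExec : Instr Val X →
    ((X → (ℕ → Val) → Val) × ℕ) → ((X → (ℕ → Val) → Val) × ℕ) → Prop
  | .assign x e, p, p' =>
      p'.2 = p.2 ∧ p'.1 = Function.update p.1 x fun ρ => e fun y => p.1 y ρ
  | .havoc x, p, p' =>
      p'.2 = p.2 + 1 ∧ p'.1 = Function.update p.1 x fun ρ => ρ p.2

/-- The symbolic transition relation: follow an edge, conjoin the (substituted) guard to
the path formula, require satisfiability, and symbolically execute the effect. -/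
def ProgramGraph.SymStep (G : ProgramGraph Val X L) (s₁ s₂ : SymState Val X L) : Prop :=
  G.edges s₁.loc s₂.loc ∧
  s₂.path = (fun ρ => s₁.path ρ ∧ G.guard s₁.loc s₂.loc fun x => s₁.smem x ρ) ∧
  (∃ ρ, s₂.path ρ) ∧
  (G.effect s₁.loc s₂.loc).symExec (s₁.smem, s₁.ctr) (s₂.smem, s₂.ctr)

/-- The initial symbolic state `⟨ℓ₀, true, m̂₀⟩` (with `m̂₀` evaluating to `m₀`). -/
def initSym (m₀ : X → Val) (G : ProgramGraph Val X L) : SymState Val X L :=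
  ⟨G.init, fun _ => True, fun x _ => m₀ x, 0⟩

/-- `SymTraces*(G)`. -/
def SymTraces (m₀ : X → Val) (G : ProgramGraph Val X L) : Set (List (SymState Val X L)) :=
  { τ | τ.head? = some (initSym m₀ G) ∧ τ.Chain' G.SymStep }

/-- Projection of a symbolic trace onto observed locations. -/
noncomputable def obsSym (O : Set L) (τ : List (SymState Val X L)) :
    List (SymState Val X L) :=
  τ.filter fun s => decide (s.loc ∈ O)

/-- `SymTraces*_O(G)`. -/
def SymTracesO (m₀ : X → Val) (G : ProgramGraph Val X L) (O : Set L) :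
    Set (List (SymState Val X L)) :=
  { t | ∃ τ ∈ SymTraces m₀ G, t = obsSym O τ }

/-- `SymTraces^k_O(G)`. -/
def SymTracesKO (m₀ : X → Val) (G : ProgramGraph Val X L) (O : Set L) (k : ℕ) :
    Set (List (SymState Val X L)) :=
  { t | t ∈ SymTracesO m₀ G O ∧ t.length = k }

/-- `path(τ̂)`: the accumulated path formula of a symbolic trace (the path formula of its
last state). -/
def pathOf (τ : List (SymState Val X L)) : (ℕ → Val) → Prop :=
  match τ.getLast? with
  | some s => s.path
  | none => fun _ => True

/-- The fresh-variable counter of (the last state of) a symbolic trace; the free symbolic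
variables of the trace are exactly the variables below this counter. -/
def ctrOf (τ : List (SymState Val X L)) : ℕ :=
  match τ.getLast? with
  | some s => s.ctr
  | none => 0

/-- Concretization `γ_ρ(τ̂)` of a symbolic trace under an assignment `ρ` of the symbolic
variables. -/
def conc (ρ : ℕ → Val) (τ : List (SymState Val X L)) : List (State Val X L) :=
  τ.map fun s => (s.loc, fun x => s.smem x ρ)

/-- Concretization `γ(T)` of a set of symbolic traces:
`γ(T) = ⋃_{τ̂ ∈ T} { γ_ρ(τ̂) | ρ ⊨ path(τ̂) }`. -/
def concSet (T : Set (List (SymState Val X L))) : Set (List (State Val X L)) :=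
  { τ | ∃ t ∈ T, ∃ ρ, pathOf t ρ ∧ τ = conc ρ t }

/-- `ψ` is `k`-encodable: `SymTraces^k_O(G)` is finite for every quantified program. -/
def HForm.EncodableAt (m₀ : X → Val) (k : ℕ) (ψ : HForm Val X L V) : Prop :=
  ∀ p ∈ ψ.graphs, (SymTracesKO m₀ p.1 p.2 k).Finite

/-- `ρ'` agrees with `ρ` except possibly on the symbolic variables of the bank of the
trace variable `π` below the counter `c` (i.e. except on `FV` of the trace bound to `π`). -/
def AgreesExc (π : V) (c : ℕ) (ρ ρ' : V → ℕ → Val) : Prop :=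
  ∀ π' n, (π' ≠ π ∨ c ≤ n) → ρ' π' n = ρ π' n

/-- The symbolic valuation `Pî_i` (with default value `m₀ x` for unbound trace variables). -/
def smemAt (m₀ : X → Val) (Pih : V → List (SymState Val X L)) (ρ : V → ℕ → Val) (i : ℕ) :
    V → X → Val :=
  fun π x =>
    match (Pih π)[i]? with
    | some s => s.smem x (ρ π)
    | none => m₀ x

/-- The symbolic encoding `⟦ψ⟧^k_Pî` of the bounded semantics, as a (shallow) first-order
formula over the symbolic variables (one bank `ρ π : ℕ → Val` per trace variable `π`):
universal quantification becomes a conjunction over all symbolic traces (universally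
quantifying their free variables, guarded by the path condition), existential
quantification becomes a disjunction (existentially quantifying the free variables,
conjoined with the path condition), and `□φ` becomes the conjunction of the instances of
`φ` at positions `0 ≤ i < k`. -/
def Enc (m₀ : X → Val) (k : ℕ) :
    HForm Val X L V → (V → List (SymState Val X L)) → (V → ℕ → Val) → Prop
  | .all G O π ψ, Pih, ρ =>
      ∀ t ∈ SymTracesKO m₀ G O k, ∀ ρ', AgreesExc π (ctrOf t) ρ ρ' →
        pathOf t (ρ' π) → Enc m₀ k ψ (Function.update Pih π t) ρ'
  | .ex G O π ψ, Pih, ρ =>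
      ∃ t ∈ SymTracesKO m₀ G O k, ∃ ρ', AgreesExc π (ctrOf t) ρ ρ' ∧
        pathOf t (ρ' π) ∧ Enc m₀ k ψ (Function.update Pih π t) ρ'
  | .always φ, Pih, ρ => ∀ i < k, φ (smemAt m₀ Pih ρ i)

/-- `Pi ≃_ρ Pî`: the concrete trace assignment `Pi` is the concretization of the symbolic
trace assignment `Pî` under `ρ` (and `ρ` satisfies all corresponding path conditions). -/
def SimRho (ρ : V → ℕ → Val) (Pi : V → List (State Val X L))
    (Pih : V → List (SymState Val X L)) : Prop :=
  ∀ π, pathOf (Pih π) (ρ π) ∧ Pi π = conc (ρ π) (Pih π)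

end HyperSE

namespace HyperSE

variable {Val X L V : Type}

/-! ### Auxiliary lemmas -/

lemma ProgramGraph.SymStep.path_eq {G : ProgramGraph Val X L} {a b : SymState Val X L}
    (h : G.SymStep a b) :
    b.path = fun ρ => a.path ρ ∧ G.guard a.loc b.loc fun x => a.smem x ρ := h.2.1

lemma ProgramGraph.SymStep.path_imp {G : ProgramGraph Val X L} {a b : SymState Val X L}
    (h : G.SymStep a b) {ρ} (hb : b.path ρ) : a.path ρ := by
  rw [h.path_eq] at hb; exact hb.1

lemma ProgramGraph.SymStep.ctr_le {G : ProgramGraph Val X L} {a b : SymState Val X L}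
    (h : G.SymStep a b) : a.ctr ≤ b.ctr := by
  obtain ⟨-, -, -, he⟩ := h
  cases hE : G.effect a.loc b.loc with
  | assign x e => rw [hE] at he; simp [Instr.symExec] at he; omega
  | havoc x => rw [hE] at he; simp [Instr.symExec] at he; omega

lemma pathOf_mem {G : ProgramGraph Val X L} :
    ∀ {τ : List (SymState Val X L)}, τ.Chain' G.SymStep → ∀ {ρ}, pathOf τ ρ →
      ∀ s ∈ τ, s.path ρ
  | [], _, _, _ => by simp
  | [a], _, ρ, hp => by
      intro s hs; simp at hs; subst hs
      simpa [pathOf] using hp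
  | a :: b :: t, hc, ρ, hp => by
      have hstep : G.SymStep a b := (List.isChain_cons_cons.mp hc).1
      have hc' : (b :: t).Chain' G.SymStep := (List.isChain_cons_cons.mp hc).2
      have hp' : pathOf (b :: t) ρ := by
        simpa [pathOf, List.getLast?_cons_cons] using hp
      have ih := pathOf_mem hc' hp'
      intro s hs
      rcases List.mem_cons.mp hs with rfl | hs
      · exact hstep.path_imp (ih b (by simp))
      · exact ih s hs

/-- A symbolic state is stable: its path formula and memory depend only on the
symbolic variables below its counter. -/
def StableAt (s : SymState Val X L) : Prop :=
  ∀ ρ ρ' : ℕ → Val, (∀ n < s.ctr, ρ' n = ρ n) →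
    ((s.path ρ' ↔ s.path ρ) ∧ ∀ x, s.smem x ρ' = s.smem x ρ)

lemma stableAt_initSym (m₀ : X → Val) (G : ProgramGraph Val X L) :
    StableAt (initSym m₀ G) := by
  intro ρ ρ' _; exact ⟨Iff.rfl, fun _ => rfl⟩

lemma ProgramGraph.SymStep.stableAt {G : ProgramGraph Val X L} {a b : SymState Val X L}
    (h : G.SymStep a b) (ha : StableAt a) : StableAt b := by
  intro ρ ρ' hag
  have hag' : ∀ n < a.ctr, ρ' n = ρ n := fun n hn => hag n (lt_of_lt_of_le hn h.ctr_le)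
  obtain ⟨hiff, hsm⟩ := ha ρ ρ' hag'
  have hmem : (fun x => a.smem x ρ') = fun x => a.smem x ρ := funext hsm
  constructor
  · rw [h.path_eq]; simp only [hmem, hiff]
  · obtain ⟨-, -, -, he⟩ := h
    cases hE : G.effect a.loc b.loc with
    | assign x e =>
        rw [hE] at he
        simp only [Instr.symExec] at he
        intro y
        rw [he.2]
        by_cases hy : y = x
        · subst hy; simp [hmem]
        · simp [Function.update_of_ne hy, hsm]
    | havoc x =>
        rw [hE] at he
        simp only [Instr.symExec] at he
        intro y
        rw [he.2]
        by_cases hy : y = x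
        · subst hy
          simp only [Function.update_self]
          exact hag a.ctr (by omega)
        · simp [Function.update_of_ne hy, hsm]

lemma stableAt_of_chain {G : ProgramGraph Val X L} {τ : List (SymState Val X L)}
    (hc : τ.Chain' G.SymStep) {a : SymState Val X L} (ha : StableAt a)
    (hh : τ.head? = some a) : ∀ s ∈ τ, StableAt s := by
  induction τ generalizing a with
  | nil => simp
  | cons a' t ih =>
      simp only [List.head?_cons, Option.some.injEq] at hh; subst hh
      intro s hs
      rcases List.mem_cons.mp hs with rfl | hs
      · exact ha
      · cases t with
        | nil => simp at hs
        | cons b t' =>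
            have hstep : G.SymStep a' b := (List.isChain_cons_cons.mp hc).1
            have hc' : (b :: t').Chain' G.SymStep := (List.isChain_cons_cons.mp hc).2
            exact ih hc' (hstep.stableAt ha) rfl s hs

lemma stableAt_of_mem {m₀ : X → Val} {G : ProgramGraph Val X L}
    {τ : List (SymState Val X L)} (hτ : τ ∈ SymTraces m₀ G) :
    ∀ s ∈ τ, StableAt s :=
  stableAt_of_chain hτ.2 (stableAt_initSym m₀ G) hτ.1

lemma ctr_pairwise {G : ProgramGraph Val X L} {τ : List (SymState Val X L)}
    (hc : τ.Chain' G.SymStep) : τ.Pairwise (fun a b => a.ctr ≤ b.ctr) := by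
  have hch : τ.Chain' (fun a b : SymState Val X L => a.ctr ≤ b.ctr) :=
    hc.imp fun a b h => h.ctr_le
  haveI : IsTrans (SymState Val X L) (fun a b => a.ctr ≤ b.ctr) :=
    ⟨fun _ _ _ => le_trans⟩
  exact List.isChain_iff_pairwise.mp hch

lemma ctr_le_ctrOf {l : List (SymState Val X L)}
    (hp : l.Pairwise (fun a b => a.ctr ≤ b.ctr)) : ∀ s ∈ l, s.ctr ≤ ctrOf l := by
  induction l with
  | nil => simp
  | cons a t ih =>
      intro s hs
      cases t with
      | nil =>
          simp at hs; subst hs; simp [ctrOf]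
      | cons b t' =>
          have hct : ctrOf (a :: b :: t') = ctrOf (b :: t') := by
            simp [ctrOf, List.getLast?_cons_cons]
          rw [hct]
          have hp' := (List.pairwise_cons.mp hp).2
          rcases List.mem_cons.mp hs with rfl | hs
          · have hb : s.ctr ≤ b.ctr := (List.pairwise_cons.mp hp).1 b (by simp)
            exact le_trans hb (ih hp' b (by simp))
          · exact ih hp' s hs

lemma obs_conc (O : Set L) (ρ : ℕ → Val) (τ : List (SymState Val X L)) :
    obs O (conc ρ τ) = conc ρ (obsSym O τ) := by
  simp only [obs, conc, obsSym, List.filter_map]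
  rfl

lemma conc_length (ρ : ℕ → Val) (τ : List (SymState Val X L)) :
    (conc ρ τ).length = τ.length := List.length_map _

lemma ProgramGraph.SymStep.conc_step {G : ProgramGraph Val X L}
    {a b : SymState Val X L} (h : G.SymStep a b) {ρ : ℕ → Val} (hb : b.path ρ) :
    G.Step (a.loc, fun x => a.smem x ρ) (b.loc, fun x => b.smem x ρ) := by
  obtain ⟨hE, hpeq, -, he⟩ := h
  rw [hpeq] at hb
  refine ⟨hE, hb.2, ?_⟩
  cases hI : G.effect a.loc b.loc with
  | assign x e =>
      rw [hI] at he
      simp only [Instr.symExec] at he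
      simp only [Instr.exec]
      funext y
      rw [he.2]
      by_cases hy : y = x
      · subst hy; simp
      · simp [Function.update_of_ne hy]
  | havoc x =>
      rw [hI] at he
      simp only [Instr.symExec] at he
      refine ⟨ρ a.ctr, ?_⟩
      funext y
      rw [he.2]
      by_cases hy : y = x
      · subst hy; simp
      · simp [Function.update_of_ne hy]

lemma chain'_conc {G : ProgramGraph Val X L} {ρ : ℕ → Val} :
    ∀ {τ : List (SymState Val X L)}, τ.Chain' G.SymStep → (∀ s ∈ τ, s.path ρ) →
      (conc ρ τ).Chain' G.Step
  | [], _, _ => by simp [conc]; exact List.isChain_nil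
  | [a], _, _ => by simp [conc]; exact List.isChain_singleton _
  | a :: b :: t, hc, hp => by
      have hstep : G.SymStep a b := (List.isChain_cons_cons.mp hc).1
      have hc' : (b :: t).Chain' G.SymStep := (List.isChain_cons_cons.mp hc).2
      have ih := chain'_conc hc' fun s hs => hp s (List.mem_cons_of_mem _ hs)
      simp only [conc, List.map_cons] at ih ⊢
      exact List.isChain_cons_cons.mpr ⟨hstep.conc_step (hp b (by simp)), ih⟩

lemma conc_mem_finTraces {m₀ : X → Val} {G : ProgramGraph Val X L}
    {τ : List (SymState Val X L)} (hτ : τ ∈ SymTraces m₀ G) {ρ : ℕ → Val}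
    (hρ : pathOf τ ρ) : conc ρ τ ∈ FinTraces m₀ G := by
  obtain ⟨hh, hc⟩ := hτ
  constructor
  · cases τ with
    | nil => simp at hh
    | cons a t =>
        simp only [List.head?_cons, Option.some.injEq] at hh; subst hh
        simp [conc, initSym]
  · exact chain'_conc hc (pathOf_mem hc hρ)

lemma exists_prefix_filter {α : Type*} (p : α → Bool) (l : List α)
    (hne : l.filter p ≠ []) :
    ∃ l', l' <+: l ∧ l'.filter p = l.filter p ∧
      l'.getLast? = (l.filter p).getLast? := by
  induction l using List.reverseRecOn with
  | nil => simp at hne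
  | append_singleton l₀ a ih =>
      by_cases hpa : p a
      · refine ⟨l₀ ++ [a], List.prefix_rfl, rfl, ?_⟩
        rw [List.filter_append, List.getLast?_concat]
        simp [hpa, List.getLast?_concat]
      · have hfil : (l₀ ++ [a]).filter p = l₀.filter p := by
          simp [List.filter_append, hpa]
        rw [hfil] at hne ⊢
        obtain ⟨l', hl, h1, h2⟩ := ih hne
        exact ⟨l', hl.trans (List.prefix_append _ _), h1, h2⟩

lemma prefix_symTraces {m₀ : X → Val} {G : ProgramGraph Val X L}
    {τ τ' : List (SymState Val X L)} (hτ : τ ∈ SymTraces m₀ G)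
    (hp : τ' <+: τ) (hne : τ' ≠ []) : τ' ∈ SymTraces m₀ G := by
  refine ⟨?_, hτ.2.prefix hp⟩
  obtain ⟨t, rfl⟩ := hp
  cases τ' with
  | nil => exact absurd rfl hne
  | cons a l =>
      have h1 := hτ.1
      rw [List.cons_append, List.head?_cons] at h1
      simpa using h1

lemma pathOf_satisfiable [Nonempty Val] {m₀ : X → Val} {G : ProgramGraph Val X L}
    {τ : List (SymState Val X L)} (hτ : τ ∈ SymTraces m₀ G) : ∃ ρ, pathOf τ ρ := by
  induction τ using List.reverseRecOn with
  | nil => exact ⟨fun _ => Classical.arbitrary Val, by simp [pathOf]⟩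
  | append_singleton l₀ b _ =>
      cases l₀ with
      | nil =>
          have hb : b = initSym m₀ G := by simpa using hτ.1
          subst hb
          refine ⟨fun _ => Classical.arbitrary Val, ?_⟩
          simp [pathOf, initSym]
      | cons a l =>
          have hc := hτ.2
          have h3 := (List.isChain_append.mp hc).2.2
          have hgl : (a :: l).getLast? = some ((a :: l).getLast (by simp)) :=
            List.getLast?_eq_getLast _
          have hstep : G.SymStep ((a :: l).getLast (by simp)) b :=
            h3 _ hgl b (by simp)
          obtain ⟨ρ, hρ⟩ := hstep.2.2.1
          refine ⟨ρ, ?_⟩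
          have hgl2 : (a :: (l ++ [b])).getLast? = some b := by
            rw [← List.cons_append]; exact List.getLast?_concat
          simpa [pathOf, hgl2] using hρ

lemma extend_core {m₀ : X → Val} {G : ProgramGraph Val X L}
    {th : List (SymState Val X L)} (httx : th ∈ SymTraces m₀ G)
    {s : SymState Val X L} (hsl : th.getLast? = some s)
    {ρ : ℕ → Val} (hρ : pathOf th ρ) {b : State Val X L}
    (hedge : G.edges s.loc b.1)
    (hguard : G.guard s.loc b.1 fun x => s.smem x ρ)
    (smem₂ : X → (ℕ → Val) → Val) (ctr₂ : ℕ) (ρ' : ℕ → Val)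
    (hag : ∀ n < s.ctr, ρ' n = ρ n)
    (hexe : (G.effect s.loc b.1).symExec (s.smem, s.ctr) (smem₂, ctr₂))
    (hval : (fun x => smem₂ x ρ') = b.2) :
    ∃ th' ∈ SymTraces m₀ G, pathOf th' ρ' ∧ conc ρ' th' = conc ρ th ++ [b] := by
  have htt := httx
  have hne : th ≠ [] := by rintro rfl; simp at hsl
  have hsmem : s ∈ th := List.mem_of_getLast? hsl
  have hstab : StableAt s := stableAt_of_mem htt s hsmem
  have hctrOf : ctrOf th = s.ctr := by simp [ctrOf, hsl]
  have hctr : ∀ u ∈ th, u.ctr ≤ s.ctr := by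
    have := ctr_le_ctrOf (ctr_pairwise htt.2)
    intro u hu; rw [← hctrOf]; exact this u hu
  have hpath_s : s.path ρ := by simpa [pathOf, hsl] using hρ
  have hpath_s' : s.path ρ' := (hstab ρ ρ' hag).1.mpr hpath_s
  have hsm' : ∀ x, s.smem x ρ' = s.smem x ρ := (hstab ρ ρ' hag).2
  set s₂ : SymState Val X L :=
    ⟨b.1, fun ρ'' => s.path ρ'' ∧ G.guard s.loc b.1 fun x => s.smem x ρ'',
      smem₂, ctr₂⟩ with hs₂
  have hpath₂ : s₂.path ρ' := by
    refine ⟨hpath_s', ?_⟩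
    have : (fun x => s.smem x ρ') = fun x => s.smem x ρ := funext hsm'
    rw [this]; exact hguard
  have hSym : G.SymStep s s₂ := ⟨hedge, rfl, ⟨ρ', hpath₂⟩, hexe⟩
  refine ⟨th ++ [s₂], ⟨?_, ?_⟩, ?_, ?_⟩
  · cases th with
    | nil => exact absurd rfl hne
    | cons a l => rw [List.cons_append, List.head?_cons]; simpa using htt.1
  · refine List.isChain_append.mpr ⟨htt.2, List.isChain_singleton _, ?_⟩
    intro x hx y hy
    rw [hsl] at hx; simp at hx hy; subst hx; subst hy
    exact hSym
  · have : (th ++ [s₂]).getLast? = some s₂ := List.getLast?_concat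
    simpa [pathOf, this] using hpath₂
  · have hcc : conc ρ' th = conc ρ th := by
      simp only [conc]
      refine List.map_congr_left fun u hu => ?_
      have hstabu : StableAt u := stableAt_of_mem htt u hu
      have hagu : ∀ n < u.ctr, ρ' n = ρ n :=
        fun n hn => hag n (lt_of_lt_of_le hn (hctr u hu))
      have := (hstabu ρ ρ' hagu).2
      exact Prod.ext rfl (funext this)
    rw [conc, List.map_append, ← conc, hcc]
    congr 1
    simp only [conc, List.map_cons, List.map_nil]
    congr 1
    exact Prod.ext rfl hval

lemma sym_complete [Nonempty Val] {m₀ : X → Val} {G : ProgramGraph Val X L}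
    {τ : List (State Val X L)} (hτ : τ ∈ FinTraces m₀ G) :
    ∃ th ∈ SymTraces m₀ G, ∃ ρ, pathOf th ρ ∧ conc ρ th = τ := by
  induction τ using List.reverseRecOn with
  | nil => simp [FinTraces] at hτ
  | append_singleton l₀ b ih =>
      cases l₀ with
      | nil =>
          have hb : b = (G.init, m₀) := by simpa [FinTraces] using hτ.1
          subst hb
          refine ⟨[initSym m₀ G], ⟨rfl, List.isChain_singleton _⟩,
            fun _ => Classical.arbitrary Val, ?_, ?_⟩
          · simp [pathOf, initSym]
          · simp [conc, initSym]
      | cons a l =>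
          have hpre : (a :: l) ∈ FinTraces m₀ G := by
            refine ⟨?_, hτ.2.prefix ⟨[b], rfl⟩⟩
            have h1 := hτ.1
            rw [List.cons_append, List.head?_cons] at h1
            simpa using h1
          obtain ⟨th, hth, ρ, hρ, hconc⟩ := ih hpre
          have hne : th ≠ [] := by
            intro h; rw [h] at hconc; simp [conc] at hconc
          -- the last state of th concretizes to the last state of a :: l
          have hlast : (conc ρ th).getLast? = some ((a :: l).getLast (by simp)) := by
            rw [hconc]; exact List.getLast?_eq_getLast _
          have hmap : (conc ρ th).getLast? =
              some ((th.getLast hne).loc, fun x => (th.getLast hne).smem x ρ) := by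
            simp only [conc, List.getLast?_map, List.getLast?_eq_getLast hne]
            rfl
          have hcl : ((th.getLast hne).loc, fun x => (th.getLast hne).smem x ρ) =
              (a :: l).getLast (by simp) := by
            rw [hmap] at hlast; exact Option.some.inj hlast
          -- the concrete step from the last state to b
          have h3 := (List.isChain_append.mp hτ.2).2.2
          have hstep : G.Step ((a :: l).getLast (by simp)) b :=
            h3 _ (List.getLast?_eq_getLast _) b (by simp)
          rw [← hcl] at hstep
          obtain ⟨hedge, hguard, hexec⟩ := hstep
          set s := th.getLast hne with hs
          have hsl : th.getLast? = some s := List.getLast?_eq_getLast _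
          cases hI : G.effect s.loc b.1 with
          | assign x e =>
              rw [hI] at hexec
              simp only [Instr.exec] at hexec
              obtain ⟨th', h1, h2, h3'⟩ := extend_core hth hsl hρ hedge hguard
                (Function.update s.smem x fun ρ'' => e fun y => s.smem y ρ'')
                s.ctr ρ (fun _ _ => rfl)
                (by rw [hI]; exact ⟨rfl, rfl⟩)
                (by
                  funext y
                  rw [hexec]
                  by_cases hy : y = x
                  · subst hy; simp
                  · simp [Function.update_of_ne hy])
              exact ⟨th', h1, ρ, h2, by rw [h3', hconc]⟩
          | havoc x =>
              rw [hI] at hexec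
              simp only [Instr.exec] at hexec
              obtain ⟨v, hv⟩ := hexec
              have hstab : StableAt s := stableAt_of_mem hth s (List.getLast_mem hne)
              have hsm : ∀ y, s.smem y (Function.update ρ s.ctr v) = s.smem y ρ :=
                (hstab ρ _ fun n hn => Function.update_of_ne (by omega) _ _).2
              obtain ⟨th', h1, h2, h3'⟩ := extend_core hth hsl hρ hedge hguard
                (Function.update s.smem x fun ρ'' => ρ'' s.ctr)
                (s.ctr + 1) (Function.update ρ s.ctr v)
                (fun n hn => Function.update_of_ne (by omega) _ _)
                (by rw [hI]; exact ⟨rfl, rfl⟩)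
                (by
                  funext y
                  rw [hv]
                  by_cases hy : y = x
                  · subst hy; simp
                  · simp [Function.update_of_ne hy, hsm])
              exact ⟨th', h1, Function.update ρ s.ctr v, h2, by rw [h3', hconc]⟩

lemma pathOf_eq_of_getLast? {l l' : List (SymState Val X L)}
    (h : l.getLast? = l'.getLast?) : pathOf l = pathOf l' := by
  unfold pathOf; rw [h]


/-- Soundness of the lazy bug-finding algorithm with counterexamples:
for `ψ = ∀^{G₁} π₁:O₁. ∃^{G₂} π₂:O₂. □φ`, `k ≤ n` with `SymTraces^k_{O₂}(G₂)` finite, a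
symbolic trace `τ̂₁ ∈ SymTraces^k_{O₁}(G₁)` and an assignment `ρ` satisfying
`path(τ̂₁) ∧ ¬⟦∃^{G₂} π₂:O₂. □φ⟧^k_{[π₁ ← τ̂₁]}`: the concretization `γ_ρ(τ̂₁)` is a
concrete observed trace of `G₁` with `k` observations, no trace
`σ₂ ∈ Traces^k_{O₂}(G₂)` satisfies `□φ` together with it under `⊨^k`, and consequently
`¬(⊨^{≤n} ψ)`. -/
theorem lazy_sound {Val X L V : Type}
    (m₀ : X → Val) (G₁ G₂ : ProgramGraph Val X L) (O₁ O₂ : Set L)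
    (π₁ π₂ : V) (hne : π₁ ≠ π₂) (φ : (V → X → Val) → Prop)
    (n k : ℕ) (hk : k ≤ n)
    (hfin : (SymTracesKO m₀ G₂ O₂ k).Finite)
    (t₁ : List (SymState Val X L)) (ht₁ : t₁ ∈ SymTracesKO m₀ G₁ O₁ k)
    (ρ : V → ℕ → Val) (hpath : pathOf t₁ (ρ π₁))
    (hneg : ¬ Enc m₀ k (HForm.ex G₂ O₂ π₂ (HForm.always φ))
        (Function.update (fun _ => ([] : List (SymState Val X L))) π₁ t₁) ρ) :
    conc (ρ π₁) t₁ ∈ TracesKO m₀ G₁ O₁ k ∧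
    (¬ ∃ σ₂ ∈ TracesKO m₀ G₂ O₂ k,
        SatK m₀ k (HForm.always φ)
          (Function.update
            (Function.update (fun _ => ([] : List (State Val X L))) π₁ (conc (ρ π₁) t₁))
            π₂ σ₂)) ∧
    ¬ ModelsUpTo m₀ n (HForm.all G₁ O₁ π₁ (HForm.ex G₂ O₂ π₂ (HForm.always φ))) := by
  haveI : Nonempty Val := ⟨ρ π₁ 0⟩
  obtain ⟨⟨th, hth, ht1eq⟩, hlen⟩ := ht₁
  have part1 : conc (ρ π₁) t₁ ∈ TracesKO m₀ G₁ O₁ k := by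
    refine ⟨?_, by rw [conc_length]; exact hlen⟩
    by_cases h0 : t₁ = []
    · obtain ⟨ρ₀, hρ₀⟩ := pathOf_satisfiable hth
      refine ⟨conc ρ₀ th, conc_mem_finTraces hth hρ₀, ?_⟩
      rw [obs_conc, ← ht1eq, h0]
      simp [conc]
    · have hfne : th.filter (fun s => decide (s.loc ∈ O₁)) ≠ [] := by
        rw [ht1eq] at h0; simpa [obsSym] using h0
      obtain ⟨l', hl, hfil, hgl⟩ := exists_prefix_filter _ th hfne
      have hl'ne : l' ≠ [] := by
        intro h; rw [h] at hfil; exact hfne hfil.symm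
      have hl'mem : l' ∈ SymTraces m₀ G₁ := prefix_symTraces hth hl hl'ne
      have ht1l' : obsSym O₁ l' = t₁ := by rw [ht1eq]; exact hfil
      have hpathl' : pathOf l' (ρ π₁) := by
        have heq : l'.getLast? = t₁.getLast? := by rw [hgl, ht1eq]; rfl
        rw [pathOf_eq_of_getLast? heq]; exact hpath
      refine ⟨conc (ρ π₁) l', conc_mem_finTraces hl'mem hpathl', ?_⟩
      rw [obs_conc, ht1l']
  have part2 : ¬ ∃ σ₂ ∈ TracesKO m₀ G₂ O₂ k,
      SatK m₀ k (HForm.always φ)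
        (Function.update
          (Function.update (fun _ => ([] : List (State Val X L))) π₁ (conc (ρ π₁) t₁))
          π₂ σ₂) := by
    rintro ⟨σ₂, ⟨⟨τ, hτ, hσ₂eq⟩, hσlen⟩, hsat⟩
    obtain ⟨th₂, hth₂, ρ₂, hρ₂, hconc₂⟩ := sym_complete hτ
    have hσ₂' : σ₂ = conc ρ₂ (obsSym O₂ th₂) := by rw [hσ₂eq, ← hconc₂, obs_conc]
    set t₂ := obsSym O₂ th₂ with ht₂def
    have ht₂mem : t₂ ∈ SymTracesKO m₀ G₂ O₂ k :=
      ⟨⟨th₂, hth₂, rfl⟩, by rw [← conc_length ρ₂ t₂, ← hσ₂', hσlen]⟩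
    have hsub : ∀ s ∈ t₂, s ∈ th₂ := fun s hs => List.mem_of_mem_filter hs
    have hstab : ∀ s ∈ t₂, StableAt s := fun s hs => stableAt_of_mem hth₂ s (hsub s hs)
    have hctr2 : ∀ s ∈ t₂, s.ctr ≤ ctrOf t₂ := by
      have hpw : th₂.Pairwise (fun a b => a.ctr ≤ b.ctr) := ctr_pairwise hth₂.2
      exact ctr_le_ctrOf (hpw.sublist (List.filter_sublist))
    have hpath2all : ∀ s ∈ t₂, s.path ρ₂ :=
      fun s hs => pathOf_mem hth₂.2 hρ₂ s (hsub s hs)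
    set ρ'₂ : ℕ → Val := fun nn => if nn < ctrOf t₂ then ρ₂ nn else ρ π₂ nn with hρ'₂
    set ρ' := Function.update ρ π₂ ρ'₂ with hρ'
    have hρ'π₂ : ρ' π₂ = ρ'₂ := Function.update_self _ _ _
    have hρ'o : ∀ π', π' ≠ π₂ → ρ' π' = ρ π' := fun π' h => Function.update_of_ne h _ _
    have hagρ' : AgreesExc π₂ (ctrOf t₂) ρ ρ' := by
      intro π' nn h
      rcases h with h | h
      · rw [hρ'o π' h]
      · by_cases hpp : π' = π₂
        · subst hpp; rw [hρ'π₂]; simp [hρ'₂, if_neg (not_lt.mpr h)]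
        · rw [hρ'o π' hpp]
    have hsmeq : ∀ s ∈ t₂, ∀ x, s.smem x (ρ' π₂) = s.smem x ρ₂ := by
      intro s hs x
      rw [hρ'π₂]
      exact (hstab s hs ρ₂ ρ'₂ fun nn hn =>
        if_pos (lt_of_lt_of_le hn (hctr2 s hs))).2 x
    have hpatht₂ : pathOf t₂ (ρ' π₂) := by
      cases hgl : t₂.getLast? with
      | none => unfold pathOf; rw [hgl]; trivial
      | some s =>
          have hsmem : s ∈ t₂ := List.mem_of_getLast? hgl
          have hctrof : ctrOf t₂ = s.ctr := by simp [ctrOf, hgl]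
          have hps : s.path ρ₂ := hpath2all s hsmem
          unfold pathOf; rw [hgl, hρ'π₂]
          exact (hstab s hsmem ρ₂ ρ'₂ fun nn hn =>
            if_pos (by rw [hctrof]; exact hn)).1.mpr hps
    apply hneg
    refine ⟨t₂, ht₂mem, ρ', hagρ', hpatht₂, ?_⟩
    intro i hi
    have hφ := hsat i hi
    have hmm : smemAt m₀
        (Function.update (Function.update (fun _ => ([] : List (SymState Val X L))) π₁ t₁) π₂ t₂) ρ' i
        = memAt m₀
        (Function.update (Function.update (fun _ => ([] : List (State Val X L))) π₁ (conc (ρ π₁) t₁)) π₂ σ₂) i := by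
      funext π x
      by_cases hp2 : π = π₂
      · subst hp2
        simp only [smemAt, memAt, Function.update_self, hσ₂', ← ht₂def, conc,
          List.getElem?_map]
        cases hidx : t₂[i]? with
        | none => rfl
        | some s =>
            simp only [Option.map_some]
            exact hsmeq s (List.mem_of_getElem? hidx) x
      · by_cases hp1 : π = π₁
        · subst hp1
          simp only [smemAt, memAt, Function.update_of_ne hp2, Function.update_self,
            conc, List.getElem?_map, hρ'o _ hp2]
          cases hidx : t₁[i]? with
          | none => rfl
          | some s => simp only [Option.map_some]
        · simp only [smemAt, memAt, Function.update_of_ne hp2, Function.update_of_ne hp1,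
            List.getElem?_nil]
    rw [hmm]
    exact hφ
  refine ⟨part1, part2, ?_⟩
  intro hM
  have h1 : SatK m₀ k (HForm.all G₁ O₁ π₁ (HForm.ex G₂ O₂ π₂ (HForm.always φ)))
      (fun _ => []) := hM k hk
  have h2 := h1 (conc (ρ π₁) t₁) part1
  exact part2 h2

end HyperSE
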